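/- Suppose the generalized share algorithm is run with shared update p_{j,t} = (1-α)v_{j,t} + α w_{j,t}/Z_t where Z_t = Σ_i w_{i,t}, α ∈ (0,1), and weights satisfying v_{j,t} ≤ w_{j,t} ≤ 1 and C w_{j,t+1} ≥ w_{j,t} for some C ≥ 1. Then for all T ≥ 1, losses ℓ_t ∈ [0,1]^d, and sequences u_1,…,u_T ∈ ℝ_+^d: Σ_t ‖u_t‖_1 p_t·ℓ_t - Σ_t u_t·ℓ_t ≤ (n(u_1^T) ln d)/η + (n(u_1^T) T ln C)/η + (η/8)Σ_t ‖u_t‖_1 + (m(u_1^T)/η) ln(max_t Z_t / α) + ((Σ_{t=2}^T ‖u_t‖_1 - m(u_1^T))/η) ln(1/(1-α)), where n(u_1^T) = Σ_i max_t u_{i,t} and m(u_1^T) = Σ_{t=2}^T D_TV(u_t,u_{t-1}). -/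

import Mathlib

/-!
In every round, Hoeffding's lemma for the normalizer of the exponential update gives
`η (‖u_t‖₁ p_t⬝ℓ_t - u_t⬝ℓ_t) ≤ Σ_j u_{t,j} log (v_{t+1,j} / p_{t,j}) + η² ‖u_t‖₁ / 8`.
Summed over `t` the right-hand side telescopes, up to `‖u_1‖₁ log d` and the cross terms
`u_{t-1,j} log v_{t,j} - u_{t,j} log p_{t,j}`. The shared update gives both
`p_t ≥ (1 - α) v_t` and `p_t ≥ α w_t / Z_t`: mass the comparator keeps costs `log (1/(1-α))`,
mass it gains (the `D_TV` terms) costs `log (max Z / α) - log w_{t,j}`, and what is left is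
`Σ_t (u_{t-1,j} - u_{t,j}) log w_{t,j}`. Summation by parts bounds it using `w ≤ 1`,
`w_1 ≥ v_1 = 1/d` and the fact that `log w_{·,j}` drops by at most `log C` per round.
-/

open Real Finset

/-- `D_TV(x,y) = Σ_{i : x_i ≥ y_i} (x_i - y_i)`. -/
noncomputable def dtv {d : ℕ} (x y : Fin d → ℝ) : ℝ :=
  ∑ i ∈ Finset.univ.filter (fun i => y i ≤ x i), (x i - y i)

theorem dtv_eq_sum_max {d : ℕ} (x y : Fin d → ℝ) : dtv x y = ∑ i, max (x i - y i) 0 := by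
  rw [dtv, sum_filter]
  refine sum_congr rfl fun i _ => ?_
  split_ifs with h
  · exact (max_eq_left (sub_nonneg.2 h)).symm
  · exact (max_eq_right (sub_nonpos.2 (not_le.1 h).le)).symm

section Hoeffding

open MeasureTheory ProbabilityTheory

theorem sum_mul_exp_le_of_mem_Icc {ι : Type*} [Fintype ι] {p ℓ : ι → ℝ} (hp : ∀ i, 0 ≤ p i)
    (hp1 : ∑ i, p i = 1) (hℓ : ∀ i, ℓ i ∈ Set.Icc (0 : ℝ) 1) (t : ℝ) :
    ∑ i, p i * exp (t * ℓ i) ≤ exp (t * ∑ i, p i * ℓ i + t ^ 2 / 8) := by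
  let _ : MeasurableSpace ι := ⊤
  let μ : PMF ι := PMF.ofFintype (fun i => ENNReal.ofReal (p i)) <| by
    rw [← ENNReal.ofReal_sum_of_nonneg fun i _ => hp i, hp1, ENNReal.ofReal_one]
  have hμ (f : ι → ℝ) : ∫ i, f i ∂μ.toMeasure = ∑ i, p i * f i := by
    simp [μ, PMF.integral_eq_sum, ENNReal.toReal_ofReal (hp _)]
  have hoeffding := (hasSubgaussianMGF_of_mem_Icc (μ := μ.toMeasure) (X := ℓ) (a := 0) (b := 1)
    (measurable_of_finite _).aemeasurable (ae_of_all _ hℓ)).mgf_le t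
  rw [mgf, hμ, hμ] at hoeffding
  norm_num at hoeffding
  calc ∑ i, p i * exp (t * ℓ i)
      = exp (t * ∑ i, p i * ℓ i) * ∑ i, p i * exp (t * (ℓ i - ∑ j, p j * ℓ j)) := by
        rw [mul_sum]
        refine sum_congr rfl fun i _ => ?_
        rw [mul_left_comm, ← exp_add]
        ring_nf
    _ ≤ exp (t * ∑ i, p i * ℓ i) * exp (t ^ 2 / 8) :=
        mul_le_mul_of_nonneg_left (hoeffding.trans_eq (by ring_nf)) (exp_pos _).le
    _ = _ := (exp_add _ _).symm

end Hoeffding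

section ExpWeights

variable {ι : Type*} [Fintype ι]

noncomputable def expWeights (η : ℝ) (p ℓ : ι → ℝ) : ι → ℝ :=
  fun j => p j * exp (-η * ℓ j) / ∑ i, p i * exp (-η * ℓ i)

variable {η : ℝ} {p ℓ : ι → ℝ}

theorem sum_mul_exp_pos [Nonempty ι] (hp : ∀ i, 0 < p i) :
    0 < ∑ i, p i * exp (-η * ℓ i) :=
  sum_pos (fun i _ => mul_pos (hp i) (exp_pos _)) univ_nonempty

theorem expWeights_pos [Nonempty ι] (hp : ∀ i, 0 < p i) (j : ι) : 0 < expWeights η p ℓ j :=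
  div_pos (mul_pos (hp j) (exp_pos _)) (sum_mul_exp_pos hp)

theorem sum_expWeights [Nonempty ι] (hp : ∀ i, 0 < p i) : ∑ j, expWeights η p ℓ j = 1 := by
  simp only [expWeights]
  rw [← sum_div, div_self (sum_mul_exp_pos hp).ne']

theorem expWeights_le_one [Nonempty ι] (hp : ∀ i, 0 < p i) (j : ι) : expWeights η p ℓ j ≤ 1 :=
  sum_expWeights (η := η) (ℓ := ℓ) hp ▸
    single_le_sum (fun i _ => (expWeights_pos hp i).le) (mem_univ j)

theorem log_expWeights [Nonempty ι] (hp : ∀ i, 0 < p i) (j : ι) :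
    log (expWeights η p ℓ j) = log (p j) - η * ℓ j - log (∑ i, p i * exp (-η * ℓ i)) := by
  rw [expWeights, log_div (mul_pos (hp j) (exp_pos _)).ne' (sum_mul_exp_pos hp).ne',
    log_mul (hp j).ne' (exp_pos _).ne', log_exp]
  ring

/-- Hoeffding's lemma bounds the log of the normalizer of `expWeights`. -/
theorem mul_sub_le_sum_mul_log_expWeights [Nonempty ι] (hp : ∀ i, 0 < p i)
    (hp1 : ∑ i, p i = 1) (hℓ : ∀ i, ℓ i ∈ Set.Icc (0 : ℝ) 1) {u : ι → ℝ} (hu : ∀ i, 0 ≤ u i) :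
    η * ((∑ i, u i) * ∑ i, p i * ℓ i - ∑ i, u i * ℓ i)
      ≤ ∑ j, u j * (log (expWeights η p ℓ j) - log (p j)) + η ^ 2 / 8 * ∑ i, u i := by
  set S := ∑ i, p i * exp (-η * ℓ i)
  have hS : log S ≤ -η * ∑ i, p i * ℓ i + η ^ 2 / 8 := by
    rw [log_le_iff_le_exp (sum_mul_exp_pos hp), show η ^ 2 = (-η) ^ 2 by ring]
    exact sum_mul_exp_le_of_mem_Icc (fun i => (hp i).le) hp1 hℓ (-η)
  have hsum : ∑ j, u j * (log (expWeights η p ℓ j) - log (p j))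
      = -η * ∑ i, u i * ℓ i - (∑ i, u i) * log S := by
    simp only [log_expWeights hp, mul_sum, sum_mul, ← sum_sub_distrib]
    exact sum_congr rfl fun i _ => by ring
  rw [hsum]
  linarith [mul_le_mul_of_nonneg_left hS (sum_nonneg fun i (_ : i ∈ univ) => hu i)]

end ExpWeights

section Share

variable {ι : Type*} [Fintype ι] {α : ℝ}

theorem share_pos_and_sum_eq_one [Nonempty ι] (hα : α ∈ Set.Ioo (0 : ℝ) 1) {v w p : ι → ℝ}
    (hv : ∀ j, 0 < v j) (hv1 : ∑ j, v j = 1) (hvw : ∀ j, v j ≤ w j)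
    (hp : ∀ j, p j = (1 - α) * v j + α * w j / ∑ i, w i) :
    (∀ j, 0 < p j) ∧ ∑ j, p j = 1 := by
  have hZ : 0 < ∑ i, w i := sum_pos (fun i _ => (hv i).trans_le (hvw i)) univ_nonempty
  refine ⟨fun j => ?_, ?_⟩
  · rw [hp j]
    have := mul_pos (sub_pos.2 hα.2) (hv j)
    have := div_pos (mul_pos hα.1 ((hv j).trans_le (hvw j))) hZ
    linarith
  · simp only [hp, sum_add_distrib, ← mul_sum, ← sum_div, hv1, mul_div_assoc, div_self hZ.ne']
    ring

theorem share_run_pos_and_sum_eq_one [Nonempty ι] (hα : α ∈ Set.Ioo (0 : ℝ) 1) {T : ℕ} {η : ℝ}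
    {ℓ p v w : ℕ → ι → ℝ} (hp1 : ∀ j, 0 < p 1 j) (hp1_sum : ∑ j, p 1 j = 1)
    (hv : ∀ t ∈ Icc 1 T, v (t + 1) = expWeights η (p t) (ℓ t))
    (hshare : ∀ t ∈ Icc 2 T, ∀ j, p t j = (1 - α) * v t j + α * w t j / ∑ i, w t i)
    (hvw : ∀ t ∈ Icc 1 T, ∀ j, v t j ≤ w t j) :
    ∀ t ∈ Icc 1 T, (∀ j, 0 < p t j) ∧ ∑ j, p t j = 1 := by
  intro t ht
  obtain ⟨ht1, htT⟩ := mem_Icc.1 ht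
  induction t, ht1 using Nat.le_induction with
  | base => exact ⟨hp1, hp1_sum⟩
  | succ t ht1 ih =>
    obtain ⟨hpt, -⟩ := ih (mem_Icc.2 ⟨ht1, by omega⟩) (by omega)
    have hvt := hv t (mem_Icc.2 ⟨ht1, by omega⟩)
    exact share_pos_and_sum_eq_one hα (hvt ▸ expWeights_pos hpt) (hvt ▸ sum_expWeights hpt)
      (hvw (t + 1) (mem_Icc.2 ⟨by omega, htT⟩)) (hshare (t + 1) (mem_Icc.2 ⟨by omega, htT⟩))

theorem log_le_log_add_log_one_div {x y c : ℝ} (hx : 0 < x) (hc : 0 < c) (h : c * x ≤ y) :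
    log x ≤ log y + log (1 / c) := by
  have := log_le_log (mul_pos hc hx) h
  rw [log_mul hc.ne' hx.ne'] at this
  rw [one_div, log_inv]
  linarith

/-- The case split behind the `D_TV` term: comparator mass that is kept is charged `L₁`, mass
that is gained is charged `L₂`, and mass that is lost is carried over at the larger value `y`. -/
theorem mul_sub_mul_le_of_le_add {a b x y z L₁ L₂ : ℝ} (ha : 0 ≤ a) (hb : 0 ≤ b) (hxy : x ≤ y)
    (hx : x ≤ z + L₁) (hy : y ≤ z + L₂) :
    a * x - b * z ≤ (b - max (b - a) 0) * L₁ + max (b - a) 0 * L₂ + (a - b) * y := by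
  rcases le_total a b with hab | hab
  · rw [max_eq_left (sub_nonneg.2 hab)]
    linarith [mul_le_mul_of_nonneg_left hx ha, mul_le_mul_of_nonneg_left hy (sub_nonneg.2 hab)]
  · rw [max_eq_right (sub_nonpos.2 hab)]
    linarith [mul_le_mul_of_nonneg_left hx hb, mul_le_mul_of_nonneg_left hxy (sub_nonneg.2 hab)]

theorem sum_mul_log_sub_le_of_share {d : ℕ} (hα : α ∈ Set.Ioo (0 : ℝ) 1) {Z Z' : ℝ}
    {u' u v w p : Fin d → ℝ} (hv : ∀ j, 0 < v j) (hvw : ∀ j, v j ≤ w j) (hZ : 0 < Z)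
    (hZZ' : Z ≤ Z') (hp : ∀ j, p j = (1 - α) * v j + α * w j / Z)
    (hu' : ∀ j, 0 ≤ u' j) (hu : ∀ j, 0 ≤ u j) :
    ∑ j, (u' j * log (v j) - u j * log (p j))
      ≤ (∑ j, u j - dtv u u') * log (1 / (1 - α)) + dtv u u' * log (Z' / α)
        + ∑ j, (u' j - u j) * log (w j) := by
  obtain ⟨hα0, hα1⟩ := hα
  rw [dtv_eq_sum_max, ← sum_sub_distrib, sum_mul, sum_mul, ← sum_add_distrib, ← sum_add_distrib]
  refine sum_le_sum fun j _ => mul_sub_mul_le_of_le_add (hu' j) (hu j)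
    (log_le_log (hv j) (hvw j)) ?_ ?_
  · refine log_le_log_add_log_one_div (hv j) (sub_pos.2 hα1) ?_
    rw [hp j]
    have := div_pos (mul_pos hα0 ((hv j).trans_le (hvw j))) hZ
    linarith
  · have hw := (hv j).trans_le (hvw j)
    rw [← one_div_div α Z']
    refine log_le_log_add_log_one_div hw (div_pos hα0 (hZ.trans_le hZZ')) ?_
    rw [hp j, div_mul_eq_mul_div]
    have := div_le_div_of_nonneg_left (mul_pos hα0 hw).le hZ hZZ'
    linarith [mul_pos (sub_pos.2 hα1) (hv j)]

end Share

section Summation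

theorem sum_Icc_sub_eq_add_sum_Icc_succ (f g : ℕ → ℝ) {m n : ℕ} (hmn : m ≤ n) :
    ∑ t ∈ Icc m n, (f t - g t) = f n - g m + ∑ t ∈ Icc (m + 1) n, (f (t - 1) - g t) := by
  induction n, hmn using Nat.le_induction with
  | base => simp
  | succ n hmn ih =>
    rw [sum_Icc_succ_top (by omega), ih, sum_Icc_succ_top (by omega), Nat.add_sub_cancel]
    ring

theorem sum_Icc_sub_mul_le {u g : ℕ → ℝ} {M c : ℝ} {a b : ℕ} (hab : a ≤ b) (hc : 0 ≤ c)
    (hu : ∀ t ∈ Icc a b, 0 ≤ u t ∧ u t ≤ M) (hg : ∀ t ∈ Ico a b, g t ≤ g (t + 1) + c) :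
    ∑ t ∈ Icc (a + 1) b, (u (t - 1) - u t) * g t
      ≤ (M - u b) * g b - (M - u a) * g a + ((b : ℝ) - a) * (M * c) := by
  induction b, hab using Nat.le_induction with
  | base => simp
  | succ b hab ih =>
    have ih := ih (fun t ht => hu t (Icc_subset_Icc_right (by omega) ht))
      (fun t ht => hg t (Ico_subset_Ico_right (by omega) ht))
    obtain ⟨hub, hubM⟩ := hu b (mem_Icc.2 ⟨hab, by omega⟩)
    have hgb := hg b (mem_Ico.2 ⟨hab, by omega⟩)
    rw [sum_Icc_succ_top (by omega), Nat.add_sub_cancel]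
    push_cast
    linarith [mul_le_mul_of_nonneg_left hgb (sub_nonneg.2 hubM), mul_nonneg hub hc]

theorem sum_Icc_sub_mul_log_le {u w : ℕ → ℝ} {M C D : ℝ} {T : ℕ} (hT : 1 ≤ T) (hC : 1 ≤ C)
    (hD : 0 < D) (hu : ∀ t ∈ Icc 1 T, 0 ≤ u t ∧ u t ≤ M) (hw : ∀ t ∈ Icc 1 T, 0 < w t ∧ w t ≤ 1)
    (hwC : ∀ t ∈ Ico 1 T, w t ≤ C * w (t + 1)) (hw1 : 1 / D ≤ w 1) :
    ∑ t ∈ Icc 2 T, (u (t - 1) - u t) * log (w t)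
      ≤ (M - u 1) * log D + ((T : ℝ) - 1) * (M * log C) := by
  have habel := sum_Icc_sub_mul_le (g := fun t => log (w t)) hT (log_nonneg hC) hu
    fun t ht => by
      obtain ⟨ht1, htT⟩ := mem_Ico.1 ht
      have := log_le_log (hw t (mem_Icc.2 ⟨ht1, htT.le⟩)).1 (hwC t ht)
      rw [log_mul (by positivity) (hw (t + 1) (mem_Icc.2 ⟨by omega, htT⟩)).1.ne'] at this
      linarith
  have hlog1 : -log D ≤ log (w 1) := by
    simpa [log_inv] using log_le_log (by positivity) hw1
  obtain ⟨hwT, hwT1⟩ := hw T (mem_Icc.2 ⟨hT, le_rfl⟩)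
  have hu1 := (hu 1 (mem_Icc.2 ⟨le_rfl, hT⟩)).2
  have huT := (hu T (mem_Icc.2 ⟨hT, le_rfl⟩)).2
  simp only [Nat.reduceAdd, Nat.cast_one] at habel
  linarith [mul_le_mul_of_nonneg_left hlog1 (sub_nonneg.2 hu1),
    mul_nonpos_of_nonneg_of_nonpos (sub_nonneg.2 huT) (log_nonpos hwT.le hwT1)]

end Summation

theorem sum_mul_log_ratio_le_add_sum_shift {d T : ℕ} (hT : 1 ≤ T) {p v u : ℕ → Fin d → ℝ}
    (hp1 : ∀ j, p 1 j = 1 / d) (hvT : ∀ j, v (T + 1) j ∈ Set.Icc (0 : ℝ) 1)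
    (huT : ∀ j, 0 ≤ u T j) :
    ∑ t ∈ Icc 1 T, ∑ j, u t j * (log (v (t + 1) j) - log (p t j))
      ≤ (∑ j, u 1 j) * log d
        + ∑ t ∈ Icc 2 T, (∑ j, u (t - 1) j * log (v t j) - ∑ j, u t j * log (p t j)) := by
  have htel := sum_Icc_sub_eq_add_sum_Icc_succ (fun t => ∑ j, u t j * log (v (t + 1) j))
    (fun t => ∑ j, u t j * log (p t j)) hT
  have hshift : ∑ t ∈ Icc (1 + 1) T,
        (∑ j, u (t - 1) j * log (v (t - 1 + 1) j) - ∑ j, u t j * log (p t j))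
      = ∑ t ∈ Icc 2 T, (∑ j, u (t - 1) j * log (v t j) - ∑ j, u t j * log (p t j)) :=
    sum_congr rfl fun t ht => by rw [Nat.sub_add_cancel (by rw [mem_Icc] at ht; omega)]
  rw [hshift] at htel
  have hlast : ∑ j, u T j * log (v (T + 1) j) ≤ 0 := sum_nonpos fun j _ =>
    mul_nonpos_of_nonneg_of_nonpos (huT j) (log_nonpos (hvT j).1 (hvT j).2)
  have hfirst : ∑ j, u 1 j * log (p 1 j) = -((∑ j, u 1 j) * log d) := by
    simp only [hp1, one_div, log_inv, mul_neg, sum_neg_distrib, sum_mul]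
  simp only [mul_sub, sum_sub_distrib] at htel ⊢
  linarith

theorem sum_mul_log_ratio_le_of_share {d T : ℕ} (hd : 1 ≤ d) (hT : 1 ≤ T) {α C Zmax : ℝ}
    (hα : α ∈ Set.Ioo (0 : ℝ) 1) (hC : 1 ≤ C) {p v w u : ℕ → Fin d → ℝ} {Z : ℕ → ℝ}
    {M : Fin d → ℝ} (hZ : ∀ t, Z t = ∑ i, w t i) (hZmax : ∀ t ∈ Icc 1 T, Z t ≤ Zmax)
    (hp1 : ∀ j, p 1 j = 1 / d) (hv1 : ∀ j, v 1 j = 1 / d)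
    (hv : ∀ t ∈ Icc 1 T, ∀ j, 0 < v t j) (hvT : ∀ j, v (T + 1) j ∈ Set.Icc (0 : ℝ) 1)
    (hshare : ∀ t ∈ Icc 2 T, ∀ j, p t j = (1 - α) * v t j + α * w t j / Z t)
    (hw : ∀ t ∈ Icc 1 T, ∀ j, v t j ≤ w t j ∧ w t j ≤ 1)
    (hwC : ∀ t ∈ Icc 1 T, ∀ j, w t j ≤ C * w (t + 1) j)
    (hu : ∀ t ∈ Icc 1 T, ∀ j, 0 ≤ u t j ∧ u t j ≤ M j) :
    ∑ t ∈ Icc 1 T, ∑ j, u t j * (log (v (t + 1) j) - log (p t j))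
      ≤ (∑ j, M j) * log d + (∑ j, M j) * T * log C
        + (∑ t ∈ Icc 2 T, dtv (u t) (u (t - 1))) * log (Zmax / α)
        + (∑ t ∈ Icc 2 T, ∑ j, u t j - ∑ t ∈ Icc 2 T, dtv (u t) (u (t - 1)))
          * log (1 / (1 - α)) := by
  have : Nonempty (Fin d) := ⟨⟨0, hd⟩⟩
  have hT1 : T ∈ Icc 1 T := mem_Icc.2 ⟨hT, le_rfl⟩
  have h11 : 1 ∈ Icc 1 T := mem_Icc.2 ⟨le_rfl, hT⟩
  have hmid : ∑ t ∈ Icc 2 T, (∑ j, u (t - 1) j * log (v t j) - ∑ j, u t j * log (p t j))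
      ≤ ∑ t ∈ Icc 2 T, ((∑ j, u t j - dtv (u t) (u (t - 1))) * log (1 / (1 - α))
        + dtv (u t) (u (t - 1)) * log (Zmax / α) + ∑ j, (u (t - 1) j - u t j) * log (w t j)) := by
    refine sum_le_sum fun t ht2 => ?_
    obtain ⟨ht, ht'⟩ : t ∈ Icc 1 T ∧ t - 1 ∈ Icc 1 T := by
      simp only [mem_Icc] at ht2 ⊢; omega
    have hZt : 0 < Z t := hZ t ▸ sum_pos (fun j _ => (hv t ht j).trans_le (hw t ht j).1)
      univ_nonempty
    rw [← sum_sub_distrib]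
    exact sum_mul_log_sub_le_of_share hα (hv t ht) (fun j => (hw t ht j).1) hZt (hZmax t ht)
      (hshare t ht2) (fun j => (hu _ ht' j).1) (fun j => (hu t ht j).1)
  have hweights := sum_le_sum fun j (_ : j ∈ univ) =>
    sum_Icc_sub_mul_log_le hT hC (by exact_mod_cast hd) (fun t ht => hu t ht j)
      (fun t ht => ⟨(hv t ht j).trans_le (hw t ht j).1, (hw t ht j).2⟩)
      (fun t ht => hwC t (Ico_subset_Icc_self ht) j) (hv1 j ▸ (hw 1 h11 j).1)
  have htel := sum_mul_log_ratio_le_add_sum_shift hT hp1 hvT fun j => (hu T hT1 j).1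
  rw [sum_comm] at hweights
  simp only [sum_add_distrib, sum_sub_distrib, ← sum_mul, ← mul_sum] at hmid hweights htel
  have hMlogC : 0 ≤ (∑ j, M j) * log C :=
    mul_nonneg (sum_nonneg fun j _ => (hu 1 h11 j).1.trans (hu 1 h11 j).2) (log_nonneg hC)
  linarith

/-- Theorem 3 of the paper (sparse target sequences): regret bound for the
generalized share algorithm with the shared update
`p_{j,t} = (1-α) v_{j,t} + α w_{j,t}/Z_t` under the conditions
`v_{j,t} ≤ w_{j,t} ≤ 1` and `C w_{j,t+1} ≥ w_{j,t}`. -/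
theorem stmt14 (d T : ℕ) (hd : 1 ≤ d) (hT : 1 ≤ T) (η α C : ℝ) (hη : 0 < η)
    (hα : α ∈ Set.Ioo (0 : ℝ) 1) (hC : 1 ≤ C)
    (ℓ p v w : ℕ → Fin d → ℝ) (u : ℕ → Fin d → ℝ)
    (Z : ℕ → ℝ) (hZ : ∀ t, Z t = ∑ i, w t i)
    (hℓ : ∀ t ∈ Finset.Icc 1 T, ∀ j, ℓ t j ∈ Set.Icc (0 : ℝ) 1)
    (hp1 : ∀ j, p 1 j = 1 / d) (hv1 : ∀ j, v 1 j = 1 / d)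
    (hv : ∀ t ∈ Finset.Icc 1 T, ∀ j,
      v (t + 1) j = p t j * Real.exp (-η * ℓ t j) / ∑ i, p t i * Real.exp (-η * ℓ t i))
    (hshare : ∀ t ∈ Finset.Icc 2 T, ∀ j,
      p t j = (1 - α) * v t j + α * w t j / Z t)
    (hw : ∀ t ∈ Finset.Icc 1 T, ∀ j, v t j ≤ w t j ∧ w t j ≤ 1)
    (hwC : ∀ t ∈ Finset.Icc 1 T, ∀ j, w t j ≤ C * w (t + 1) j)
    (hu : ∀ t ∈ Finset.Icc 1 T, ∀ i, 0 ≤ u t i) :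
    ∑ t ∈ Finset.Icc 1 T, (∑ i, u t i) * (∑ i, p t i * ℓ t i)
        - ∑ t ∈ Finset.Icc 1 T, ∑ i, u t i * ℓ t i
      ≤ (∑ i, (Finset.Icc 1 T).sup' (Finset.nonempty_Icc.2 hT) (fun t => u t i))
            * Real.log d / η
        + (∑ i, (Finset.Icc 1 T).sup' (Finset.nonempty_Icc.2 hT) (fun t => u t i))
            * T * Real.log C / η
        + (η / 8) * ∑ t ∈ Finset.Icc 1 T, ∑ i, u t i
        + (∑ t ∈ Finset.Icc 2 T, dtv (u t) (u (t - 1))) / η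
            * Real.log ((Finset.Icc 1 T).sup' (Finset.nonempty_Icc.2 hT) Z / α)
        + (∑ t ∈ Finset.Icc 2 T, ∑ i, u t i
            - ∑ t ∈ Finset.Icc 2 T, dtv (u t) (u (t - 1))) / η
          * Real.log (1 / (1 - α)) := by
  have hdR : (0 : ℝ) < d := by exact_mod_cast hd
  have : Nonempty (Fin d) := ⟨⟨0, hd⟩⟩
  have hv' : ∀ t ∈ Icc 1 T, v (t + 1) = expWeights η (p t) (ℓ t) := fun t ht => funext (hv t ht)
  have hrun := share_run_pos_and_sum_eq_one hα (fun j => by rw [hp1]; positivity)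
    (by simp [hp1, hdR.ne']) hv' (fun t ht j => hZ t ▸ hshare t ht j) (fun t ht j => (hw t ht j).1)
  have hvpos : ∀ t ∈ Icc 1 T, ∀ j, 0 < v t j := by
    intro t ht j
    rcases (mem_Icc.1 ht).1.eq_or_lt with rfl | ht1
    · rw [hv1]; positivity
    · have hs : t - 1 ∈ Icc 1 T := by rw [mem_Icc] at ht ⊢; omega
      have := expWeights_pos (η := η) (ℓ := ℓ (t - 1)) (hrun _ hs).1 j
      rwa [← hv' _ hs, Nat.sub_add_cancel ht1.le] at this
  have hT1 : T ∈ Icc 1 T := mem_Icc.2 ⟨hT, le_rfl⟩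
  have hround : η * (∑ t ∈ Icc 1 T, (∑ i, u t i) * (∑ i, p t i * ℓ t i)
        - ∑ t ∈ Icc 1 T, ∑ i, u t i * ℓ t i)
      ≤ ∑ t ∈ Icc 1 T, ∑ j, u t j * (log (v (t + 1) j) - log (p t j))
        + η ^ 2 / 8 * ∑ t ∈ Icc 1 T, ∑ i, u t i := by
    rw [← sum_sub_distrib, mul_sum, mul_sum, ← sum_add_distrib]
    exact sum_le_sum fun t ht => hv' t ht ▸
      mul_sub_le_sum_mul_log_expWeights (hrun t ht).1 (hrun t ht).2 (hℓ t ht) (hu t ht)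
  have hpotential := sum_mul_log_ratio_le_of_share
    (M := fun i => (Icc 1 T).sup' (nonempty_Icc.2 hT) fun t => u t i)
    (Zmax := (Icc 1 T).sup' (nonempty_Icc.2 hT) Z) hd hT hα hC hZ (fun t ht => le_sup' Z ht)
    hp1 hv1 hvpos
    (fun j => hv' T hT1 ▸ ⟨(expWeights_pos (hrun T hT1).1 j).le, expWeights_le_one (hrun T hT1).1 j⟩)
    hshare hw hwC (fun t ht j => ⟨hu t ht j, le_sup' (fun t => u t j) ht⟩)
  rw [← mul_le_mul_iff_right₀ hη]
  field_simp
  linarith
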